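/- arXiv:2012.06958 — 4 statements merged into one kernel-verified Lean document; each statement's English description precedes it below -/
import Mathlib

section
/- Let μ be a probability measure on ℝ with finite second moment, let X_1,…,X_k and Y_1,…,Y_k be 2k i.i.d. samples from μ, and let X_(i) and Y_(i) denote the respective order statistics. Then the k-variance equals the sum of the variances of the order statistics: Var_k(μ) = (1/2)·E[∑_{i=1}^k (X_(i) − Y_(i))²] = ∑_{i=1}^k Var(X_(i)). -/
open MeasureTheory ProbabilityTheory Real Filter

noncomputable section

namespace KVariance

/-- Matching cost between two `k`-tuples of points in `ℝ^d`: the minimum over permutations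
`σ` of `(1/k) ∑ i, ‖x i - y (σ i)‖²`; this equals the squared 2-Wasserstein distance between
the two empirical measures. -/
def matchCost {d k : ℕ} (x y : Fin k → EuclideanSpace ℝ (Fin d)) : ℝ :=
  (1 / (k : ℝ)) * ⨅ σ : Equiv.Perm (Fin k), ∑ i, ‖x i - y (σ i)‖ ^ 2

/-- The ambient scaling rate `ρ(k,d)`, with `ρ(1,d) = 1`. -/
def rho (k d : ℕ) : ℝ :=
  if k = 1 then 1
  else if d = 1 then (k : ℝ)
  else if d = 2 then (k : ℝ) / Real.log k
  else (k : ℝ) ^ ((2 : ℝ) / d)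

/-- The `k`-variance of a measure `μ` on `ℝ^d`:
`(ρ(k,d)/2) · E[M(X,Y)]` where `X, Y` are independent `k`-tuples of i.i.d. samples from `μ`. -/
def kVar (k d : ℕ) (μ : Measure (EuclideanSpace ℝ (Fin d))) : ℝ :=
  rho k d / 2 *
    ∫ p, matchCost p.1 p.2
      ∂((Measure.pi fun _ : Fin k => μ).prod (Measure.pi fun _ : Fin k => μ))

/-- Matching cost between two `k`-tuples of reals. -/
def matchCost1 {k : ℕ} (x y : Fin k → ℝ) : ℝ :=
  (1 / (k : ℝ)) * ⨅ σ : Equiv.Perm (Fin k), ∑ i, (x i - y (σ i)) ^ 2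

/-- The `k`-variance of a measure on `ℝ` (where `ρ(k,1) = k`). -/
def kVar1 (k : ℕ) (μ : Measure ℝ) : ℝ :=
  (k : ℝ) / 2 *
    ∫ p, matchCost1 p.1 p.2
      ∂((Measure.pi fun _ : Fin k => μ).prod (Measure.pi fun _ : Fin k => μ))

/-- The order statistics of a `k`-tuple of reals: `orderStat x i` is the `i`-th smallest
entry of `x` (with `i : Fin k`, zero-based). -/
def orderStat {k : ℕ} (x : Fin k → ℝ) : Fin k → ℝ := x ∘ Tuple.sort x

/-- The uniform distribution on `[0,1]`. -/
def unif : Measure ℝ := volume.restrict (Set.Icc (0 : ℝ) 1)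

/-- Covariance of two real random variables. -/
def cov {Ω : Type*} [MeasurableSpace Ω] (X Y : Ω → ℝ) (μ : Measure Ω) : ℝ :=
  ∫ ω, (X ω - ∫ a, X a ∂μ) * (Y ω - ∫ a, Y a ∂μ) ∂μ

end KVariance

open KVariance

namespace KVariance

variable {k : ℕ}


lemma orderStat_monotone (x : Fin k → ℝ) : Monotone (orderStat x) :=
  Tuple.monotone_sort x

/-- Rearrangement: the sorted matching minimizes the sum of squared differences. -/
lemma sorted_sum_sq_le (x y : Fin k → ℝ) (σ : Equiv.Perm (Fin k)) :
    ∑ i, (orderStat x i - orderStat y i) ^ 2 ≤ ∑ i, (x i - y (σ i)) ^ 2 := by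
  set a := orderStat x with ha
  set b := orderStat y with hb
  set τ := Tuple.sort x
  set τ' := Tuple.sort y
  have h1 : ∑ i, (x i - y (σ i)) ^ 2 = ∑ j, (a j - b ((τ'⁻¹ * σ * τ) j)) ^ 2 := by
    rw [← Equiv.sum_comp τ (fun i => (x i - y (σ i)) ^ 2)]
    refine Finset.sum_congr rfl fun j _ => ?_
    have : b ((τ'⁻¹ * σ * τ) j) = y (σ (τ j)) := by
      simp [hb, orderStat, Equiv.Perm.mul_apply, τ']
    rw [this]
    rfl
  rw [h1]
  set pp := τ'⁻¹ * σ * τ with hpp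
  have hmon : Monovary a b := (orderStat_monotone x).monovary (orderStat_monotone y)
  have hre : ∑ j, a j * b (pp j) ≤ ∑ j, a j * b j := by
    simpa [smul_eq_mul] using hmon.sum_smul_comp_perm_le_sum_smul (σ := pp)
  have hbsq : ∑ j, (b (pp j)) ^ 2 = ∑ j, (b j) ^ 2 :=
    Equiv.sum_comp pp (fun j => (b j) ^ 2)
  have expand : ∀ (c : Fin k → ℝ), ∑ j, (a j - c j) ^ 2
      = ∑ j, (a j) ^ 2 + ∑ j, (c j) ^ 2 - 2 * ∑ j, a j * c j := by
    intro c
    rw [Finset.mul_sum, ← Finset.sum_add_distrib, ← Finset.sum_sub_distrib]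
    exact Finset.sum_congr rfl fun j _ => by ring
  have e1 := expand (fun j => b (pp j))
  have e2 := expand b
  rw [e1, e2, hbsq]
  linarith

lemma matchCost1_eq (x y : Fin k → ℝ) :
    (⨅ σ : Equiv.Perm (Fin k), ∑ i, (x i - y (σ i)) ^ 2)
      = ∑ i, (orderStat x i - orderStat y i) ^ 2 := by
  haveI : Nonempty (Equiv.Perm (Fin k)) := ⟨1⟩
  refine le_antisymm ?_ (le_ciInf fun σ => sorted_sum_sq_le x y σ)
  have hbdd : BddBelow (Set.range fun σ : Equiv.Perm (Fin k) => ∑ i, (x i - y (σ i)) ^ 2) := by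
    refine ⟨0, ?_⟩
    rintro r ⟨σ, rfl⟩
    positivity
  refine le_trans (ciInf_le hbdd (Tuple.sort y * (Tuple.sort x)⁻¹)) (le_of_eq ?_)
  rw [← Equiv.sum_comp (Tuple.sort x)
    (fun i => (x i - y ((Tuple.sort y * (Tuple.sort x)⁻¹) i)) ^ 2)]
  refine Finset.sum_congr rfl fun j _ => ?_
  simp [orderStat, Equiv.Perm.mul_apply]

lemma measurableSet_sort_fiber (σ : Equiv.Perm (Fin k)) :
    MeasurableSet {x : Fin k → ℝ | Tuple.sort x = σ} := by
  have hset : {x : Fin k → ℝ | Tuple.sort x = σ}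
      = {x : Fin k → ℝ | Monotone (x ∘ ⇑σ)}
        ∩ {x : Fin k → ℝ | ∀ i j, i < j → x (σ i) = x (σ j) → σ i < σ j} := by
    ext x
    simp only [Set.mem_setOf_eq, Set.mem_inter_iff]
    rw [eq_comm, Tuple.eq_sort_iff]
  rw [hset]
  apply MeasurableSet.inter
  · have : {x : Fin k → ℝ | Monotone (x ∘ ⇑σ)}
        = ⋂ (p : Fin k) (q : Fin k) (_ : p ≤ q), {x : Fin k → ℝ | x (σ p) ≤ x (σ q)} := by
      ext x
      simp only [Set.mem_setOf_eq, Set.mem_iInter]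
      exact ⟨fun h p q hpq => h hpq, fun h p q hpq => h p q hpq⟩
    rw [this]
    exact MeasurableSet.iInter fun p => MeasurableSet.iInter fun q =>
      MeasurableSet.iInter fun _ =>
        measurableSet_le (measurable_pi_apply _) (measurable_pi_apply _)
  · have : {x : Fin k → ℝ | ∀ i j, i < j → x (σ i) = x (σ j) → σ i < σ j}
        = ⋂ (p : Fin k) (q : Fin k) (_ : p < q),
            {x : Fin k → ℝ | x (σ p) = x (σ q) → σ p < σ q} := by
      ext x
      simp only [Set.mem_setOf_eq, Set.mem_iInter]
    rw [this]
    refine MeasurableSet.iInter fun p => MeasurableSet.iInter fun q =>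
      MeasurableSet.iInter fun _ => ?_
    by_cases h : σ p < σ q
    · have : {x : Fin k → ℝ | x (σ p) = x (σ q) → σ p < σ q} = Set.univ := by
        ext x; simp [h]
      rw [this]
      exact MeasurableSet.univ
    · have : {x : Fin k → ℝ | x (σ p) = x (σ q) → σ p < σ q}
          = {x : Fin k → ℝ | x (σ p) = x (σ q)}ᶜ := by
        ext x
        simp only [Set.mem_setOf_eq, Set.mem_compl_iff]
        exact ⟨fun hx hxe => h (hx hxe), fun hx hxe => absurd hxe hx⟩
      rw [this]
      exact (measurableSet_eq_fun (f := fun x : Fin k → ℝ => x (σ p)) (g := fun x : Fin k → ℝ => x (σ q)) (measurable_pi_apply _) (measurable_pi_apply _)).compl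

lemma measurable_orderStat (i : Fin k) :
    Measurable (fun x : Fin k → ℝ => orderStat x i) := by
  have hrepr : (fun x : Fin k → ℝ => orderStat x i)
      = fun x => ∑ σ : Equiv.Perm (Fin k), if Tuple.sort x = σ then x (σ i) else 0 := by
    funext x
    rw [Finset.sum_eq_single (Tuple.sort x)]
    · simp [orderStat]
    · intro σ _ hσ
      simp [Ne.symm hσ]
    · intro h
      exact absurd (Finset.mem_univ _) h
  rw [hrepr]
  refine Finset.measurable_sum _ fun σ _ => ?_
  exact Measurable.ite (measurableSet_sort_fiber σ) (measurable_pi_apply _) measurable_const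



lemma pi_map_eval (μ : Measure ℝ) [IsProbabilityMeasure μ] (j : Fin k) :
    (Measure.pi fun _ : Fin k => μ).map (fun x => x j) = μ := by
  refine Measure.ext fun s hs => ?_
  rw [Measure.map_apply (measurable_pi_apply j) hs]
  have h1 : (fun x : Fin k → ℝ => x j) ⁻¹' s
      = Set.pi Set.univ (Function.update (fun _ : Fin k => (Set.univ : Set ℝ)) j s) := by
    rw [Set.eval_preimage]
  rw [h1, Measure.pi_pi]
  rw [Finset.prod_eq_single j]
  · simp
  · intro b _ hb
    simp [Function.update_of_ne hb]
  · intro h; exact absurd (Finset.mem_univ _) h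

lemma integrable_sq_orderStat (μ : Measure ℝ) [IsProbabilityMeasure μ]
    (h2 : Integrable (fun x => x ^ 2) μ) (i : Fin k) :
    Integrable (fun x => (orderStat x i) ^ 2) (Measure.pi fun _ : Fin k => μ) := by
  have hcoord : ∀ j : Fin k, Integrable (fun x : Fin k → ℝ => (x j) ^ 2)
      (Measure.pi fun _ : Fin k => μ) := by
    intro j
    have hmp : MeasurePreserving (fun x : Fin k → ℝ => x j)
        (Measure.pi fun _ : Fin k => μ) μ := ⟨measurable_pi_apply j, pi_map_eval μ j⟩
    exact (hmp.integrable_comp h2.aestronglyMeasurable).2 h2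
  have hg : Integrable (fun x : Fin k → ℝ => ∑ j, (x j) ^ 2)
      (Measure.pi fun _ : Fin k => μ) :=
    integrable_finset_sum _ fun j _ => hcoord j
  refine hg.mono' ((measurable_orderStat i).pow_const 2).aestronglyMeasurable ?_
  refine Filter.Eventually.of_forall fun x => ?_
  rw [Real.norm_eq_abs, abs_of_nonneg (sq_nonneg _)]
  have : (orderStat x i) ^ 2 = (x (Tuple.sort x i)) ^ 2 := rfl
  rw [this]
  exact Finset.single_le_sum (fun j _ => sq_nonneg (x j)) (Finset.mem_univ _)

lemma integrable_term (μ : Measure ℝ) [IsProbabilityMeasure μ]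
    (h2 : Integrable (fun x => x ^ 2) μ) (i : Fin k) :
    Integrable (fun p : (Fin k → ℝ) × (Fin k → ℝ) => (orderStat p.1 i - orderStat p.2 i) ^ 2)
      ((Measure.pi fun _ : Fin k => μ).prod (Measure.pi fun _ : Fin k => μ)) := by
  set pim := (Measure.pi fun _ : Fin k => μ) with hpim
  set f : (Fin k → ℝ) → ℝ := fun x => orderStat x i with hf
  have hsm : AEStronglyMeasurable f pim := (measurable_orderStat i).aestronglyMeasurable
  have hsq : Integrable (fun x => f x ^ 2) pim := integrable_sq_orderStat μ h2 i
  have hmem : MemLp f 2 pim := (memLp_two_iff_integrable_sq hsm).2 hsq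
  have hint : Integrable f pim := hmem.integrable one_le_two
  have I1 : Integrable (fun p : (Fin k → ℝ) × (Fin k → ℝ) => f p.1 ^ 2) (pim.prod pim) := by
    have := hsq.mul_prod (integrable_const (1 : ℝ) : Integrable (fun _ : Fin k → ℝ => (1:ℝ)) pim)
    simpa using this
  have I2 : Integrable (fun p : (Fin k → ℝ) × (Fin k → ℝ) => f p.2 ^ 2) (pim.prod pim) := by
    have := (integrable_const (1 : ℝ) : Integrable (fun _ : Fin k → ℝ => (1:ℝ)) pim).mul_prod hsq
    simpa using this
  have I3 : Integrable (fun p : (Fin k → ℝ) × (Fin k → ℝ) => f p.1 * f p.2) (pim.prod pim) :=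
    hint.mul_prod hint
  have I12 : Integrable (fun p : (Fin k → ℝ) × (Fin k → ℝ) => f p.1 ^ 2 + f p.2 ^ 2)
      (pim.prod pim) := I1.add I2
  exact (I12.sub (I3.const_mul 2)).congr
    (Filter.Eventually.of_forall fun p => by simp only [hf, Pi.sub_apply]; ring)

lemma double_integral_eq_two_var (μ : Measure ℝ) [IsProbabilityMeasure μ]
    (h2 : Integrable (fun x => x ^ 2) μ) (i : Fin k) :
    ∫ p, (orderStat p.1 i - orderStat p.2 i) ^ 2
        ∂((Measure.pi fun _ : Fin k => μ).prod (Measure.pi fun _ : Fin k => μ))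
      = 2 * variance (fun x => orderStat x i) (Measure.pi fun _ : Fin k => μ) := by
  set pim := (Measure.pi fun _ : Fin k => μ) with hpim
  set f : (Fin k → ℝ) → ℝ := fun x => orderStat x i with hf
  have hsm : AEStronglyMeasurable f pim := (measurable_orderStat i).aestronglyMeasurable
  have hsq : Integrable (fun x => f x ^ 2) pim := integrable_sq_orderStat μ h2 i
  have hmem : MemLp f 2 pim := (memLp_two_iff_integrable_sq hsm).2 hsq
  have hint : Integrable f pim := hmem.integrable one_le_two
  have I1 : Integrable (fun p : (Fin k → ℝ) × (Fin k → ℝ) => f p.1 ^ 2) (pim.prod pim) := by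
    have := hsq.mul_prod (integrable_const (1 : ℝ) : Integrable (fun _ : Fin k → ℝ => (1:ℝ)) pim)
    simpa using this
  have I2 : Integrable (fun p : (Fin k → ℝ) × (Fin k → ℝ) => f p.2 ^ 2) (pim.prod pim) := by
    have := (integrable_const (1 : ℝ) : Integrable (fun _ : Fin k → ℝ => (1:ℝ)) pim).mul_prod hsq
    simpa using this
  have I3 : Integrable (fun p : (Fin k → ℝ) × (Fin k → ℝ) => f p.1 * f p.2) (pim.prod pim) :=
    hint.mul_prod hint
  have hexp : (fun p : (Fin k → ℝ) × (Fin k → ℝ) => (f p.1 - f p.2) ^ 2)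
      = fun p => f p.1 ^ 2 + f p.2 ^ 2 - 2 * (f p.1 * f p.2) := by
    funext p; ring
  have I12 : Integrable (fun p : (Fin k → ℝ) × (Fin k → ℝ) => f p.1 ^ 2 + f p.2 ^ 2)
      (pim.prod pim) := I1.add I2
  rw [hexp, integral_sub I12 (I3.const_mul 2), integral_add I1 I2, integral_const_mul]
  have e1 : ∫ p : (Fin k → ℝ) × (Fin k → ℝ), f p.1 ^ 2 ∂(pim.prod pim) = ∫ x, f x ^ 2 ∂pim := by
    simpa using integral_fun_fst (μ := pim) (ν := pim) (f := fun x : Fin k → ℝ => f x ^ 2)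
  have e2 : ∫ p : (Fin k → ℝ) × (Fin k → ℝ), f p.2 ^ 2 ∂(pim.prod pim) = ∫ x, f x ^ 2 ∂pim := by
    simpa using integral_fun_snd (μ := pim) (ν := pim) (f := fun x : Fin k → ℝ => f x ^ 2)
  have e3 : ∫ p : (Fin k → ℝ) × (Fin k → ℝ), f p.1 * f p.2 ∂(pim.prod pim)
      = (∫ x, f x ∂pim) * (∫ x, f x ∂pim) := integral_prod_mul f f
  rw [e1, e2, e3, variance_eq_sub hmem]
  have : pim[f ^ 2] = ∫ x, f x ^ 2 ∂pim := by
    simp [Pi.pow_apply]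
  rw [this]
  ring


end KVariance

/-- in one dimension the `k`-variance equals
`(1/2)·E ∑ᵢ (X₍ᵢ₎ - Y₍ᵢ₎)²`, the sum over `i` of the variances of the order statistics. -/
theorem statement4 (k : ℕ) (μ : MeasureTheory.Measure ℝ)
    [MeasureTheory.IsProbabilityMeasure μ]
    (h2 : MeasureTheory.Integrable (fun x => x ^ 2) μ) :
    kVar1 k μ = (1 / 2) *
        (∫ p, ∑ i, (orderStat p.1 i - orderStat p.2 i) ^ 2
          ∂((MeasureTheory.Measure.pi fun _ : Fin k => μ).prod
              (MeasureTheory.Measure.pi fun _ : Fin k => μ))) ∧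
      kVar1 k μ = ∑ i : Fin k,
        variance (fun x => orderStat x i) (MeasureTheory.Measure.pi fun _ : Fin k => μ) := by
  set pim := (MeasureTheory.Measure.pi fun _ : Fin k => μ) with hpim
  set S : (Fin k → ℝ) × (Fin k → ℝ) → ℝ :=
    fun p => ∑ i, (orderStat p.1 i - orderStat p.2 i) ^ 2 with hs
  have hmc : (fun p : (Fin k → ℝ) × (Fin k → ℝ) => matchCost1 p.1 p.2)
      = fun p => (1 / (k : ℝ)) * S p := by
    funext p
    rw [matchCost1, matchCost1_eq]
  have hS : kVar1 k μ = (k : ℝ) / 2 * ((1 / (k : ℝ)) * ∫ p, S p ∂(pim.prod pim)) := by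
    rw [kVar1, hmc, integral_const_mul]
  have h1 : kVar1 k μ = (1 / 2) * ∫ p, S p ∂(pim.prod pim) := by
    rw [hS]
    rcases Nat.eq_zero_or_pos k with hk | hk
    · subst hk
      simp [hs]
    · have hne : (k : ℝ) ≠ 0 := Nat.cast_ne_zero.2 hk.ne'
      field_simp
  refine ⟨h1, ?_⟩
  rw [h1]
  have hsum : ∫ p, S p ∂(pim.prod pim)
      = ∑ i : Fin k, ∫ p, (orderStat p.1 i - orderStat p.2 i) ^ 2 ∂(pim.prod pim) := by
    rw [hs]
    exact integral_finset_sum _ fun i _ => integrable_term μ h2 i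
  rw [hsum, Finset.mul_sum]
  refine Finset.sum_congr rfl fun i _ => ?_
  rw [double_integral_eq_two_var μ h2 i]
  ring
end
end

section
/- Let α > 0 and consider the Weibull distribution with CDF F(x) = 1 − exp(−x^α) and density f(x) = α·x^{α−1}·exp(−x^α) for x > 0. Then the integral ∫_0^∞ F(x)(1−F(x))/f(x) dx = ∫_0^∞ (1 − exp(−x^α))/(α·x^{α−1}) dx is finite if and only if α > 2. -/
open MeasureTheory ProbabilityTheory Real Filter

noncomputable section

open KVariance

/-- for the Weibull distribution with shape `α > 0` (CDF `1 - exp(-x^α)`,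
density `α x^(α-1) exp(-x^α)` on `x > 0`), the integral
`∫₀^∞ F(x)(1-F(x))/f(x) dx = ∫₀^∞ (1 - exp(-x^α))/(α x^(α-1)) dx` is finite iff `α > 2`. -/
theorem statement13 (α : ℝ) (hα : 0 < α) :
    MeasureTheory.IntegrableOn
        (fun x : ℝ => (1 - Real.exp (-(x ^ α))) / (α * x ^ (α - 1)))
        (Set.Ioi 0) MeasureTheory.volume
      ↔ 2 < α := by

  set g : ℝ → ℝ := fun x : ℝ => (1 - Real.exp (-(x ^ α))) / (α * x ^ (α - 1)) with hg
  have hg_meas : Measurable g := by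
    fun_prop
  have hgpos : ∀ x : ℝ, 0 < x → 0 ≤ g x := by
    intro x hx
    have hd : 0 < α * x ^ (α - 1) := by positivity
    have hn : 0 ≤ 1 - Real.exp (-(x ^ α)) := by
      have : Real.exp (-(x ^ α)) ≤ 1 := by
        rw [Real.exp_le_one_iff]
        have := Real.rpow_pos_of_pos hx α
        linarith
      linarith
    exact div_nonneg hn hd.le
  constructor
  · intro hint
    by_contra hle
    push_neg at hle
    set c : ℝ := (1 - Real.exp (-1)) / α with hc
    have hcpos : 0 < c := by
      apply div_pos _ hα
      have : Real.exp (-1 : ℝ) < 1 := by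
        rw [Real.exp_lt_one_iff]; norm_num
      linarith
    have h1 : MeasureTheory.IntegrableOn (fun x : ℝ => c * x ^ (1 - α))
        (Set.Ioi 1) MeasureTheory.volume := by
      apply MeasureTheory.Integrable.mono'
        (hint.mono_set (Set.Ioi_subset_Ioi (by norm_num)))
        ((by fun_prop : Measurable fun x : ℝ => c * x ^ (1 - α)).aestronglyMeasurable.restrict)
      rw [MeasureTheory.ae_restrict_iff' measurableSet_Ioi]
      filter_upwards with x hx
      have hx1 : (1 : ℝ) < x := hx
      have hx0 : (0 : ℝ) < x := by linarith
      have hp : 0 < x ^ (α - 1) := Real.rpow_pos_of_pos hx0 _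
      have hxe : x ^ (1 - α) = (x ^ (α - 1))⁻¹ := by
        rw [show (1 - α) = -(α - 1) by ring, Real.rpow_neg hx0.le]
      have hbnd : c * x ^ (1 - α) = (1 - Real.exp (-1)) / (α * x ^ (α - 1)) := by
        rw [hxe, hc]; field_simp
      have hxa : (1 : ℝ) ≤ x ^ α := by
        have := Real.rpow_le_rpow (by norm_num : (0:ℝ) ≤ 1) hx1.le hα.le
        simpa using this
      have hexp : Real.exp (-(x ^ α)) ≤ Real.exp (-1) := by
        apply Real.exp_le_exp.mpr; linarith
      rw [Real.norm_of_nonneg (by positivity), hbnd, hg]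
      apply div_le_div_of_nonneg_right (by linarith) (by positivity)
    have h2 := h1.const_mul c⁻¹
    have h3 : MeasureTheory.IntegrableOn (fun x : ℝ => x ^ (1 - α))
        (Set.Ioi 1) MeasureTheory.volume := by
      have heq : (fun x : ℝ => c⁻¹ * (c * x ^ (1 - α))) = fun x : ℝ => x ^ (1 - α) := by
        funext x; field_simp
      rwa [heq] at h2
    have := (integrableOn_Ioi_rpow_iff one_pos).mp h3
    linarith
  · intro hα2
    have h01 : MeasureTheory.IntegrableOn g (Set.Ioc 0 1) MeasureTheory.volume := by
      apply MeasureTheory.Integrable.mono'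
        ((MeasureTheory.integrableOn_const_iff (C := α⁻¹)).mpr (Or.inr (by
          rw [Real.volume_Ioc]; exact ENNReal.ofReal_lt_top)) : MeasureTheory.IntegrableOn
            (fun _ : ℝ => α⁻¹) (Set.Ioc 0 1) MeasureTheory.volume)
        hg_meas.aestronglyMeasurable.restrict
      rw [MeasureTheory.ae_restrict_iff' measurableSet_Ioc]
      filter_upwards with x hx
      obtain ⟨hx0, hx1⟩ := hx
      have hp : 0 < x ^ (α - 1) := Real.rpow_pos_of_pos hx0 _
      have hxa : x ^ α = x ^ (α - 1) * x := by
        rw [← Real.rpow_add_one hx0.ne' (α - 1)]; ring_nf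
      have hnum : 1 - Real.exp (-(x ^ α)) ≤ x ^ α := by
        have := Real.add_one_le_exp (-(x ^ α)); linarith
      rw [Real.norm_of_nonneg (hgpos x hx0), hg]
      rw [div_le_iff₀ (by positivity)]
      have h1 : x ^ (α - 1) * x ≤ x ^ (α - 1) :=  by nlinarith
      have : 1 - Real.exp (-(x ^ α)) ≤ x ^ (α - 1) := by linarith [hxa ▸ hnum]
      rw [show α⁻¹ * (α * x ^ (α - 1)) = x ^ (α - 1) by field_simp]
      linarith
    have h1i : MeasureTheory.IntegrableOn g (Set.Ioi 1) MeasureTheory.volume := by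
      have hb : MeasureTheory.IntegrableOn (fun x : ℝ => α⁻¹ * x ^ (1 - α))
          (Set.Ioi 1) MeasureTheory.volume :=
        ((integrableOn_Ioi_rpow_iff one_pos).mpr (by linarith)).const_mul _
      apply MeasureTheory.Integrable.mono' hb hg_meas.aestronglyMeasurable.restrict
      rw [MeasureTheory.ae_restrict_iff' measurableSet_Ioi]
      filter_upwards with x hx
      have hx1 : (1 : ℝ) < x := hx
      have hx0 : (0 : ℝ) < x := by linarith
      have hp : 0 < x ^ (α - 1) := Real.rpow_pos_of_pos hx0 _
      have hxe : x ^ (1 - α) = (x ^ (α - 1))⁻¹ := by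
        rw [show (1 - α) = -(α - 1) by ring, Real.rpow_neg hx0.le]
      have hbnd : α⁻¹ * x ^ (1 - α) = 1 / (α * x ^ (α - 1)) := by
        rw [hxe]; field_simp
      rw [Real.norm_of_nonneg (hgpos x hx0), hg, hbnd]
      apply div_le_div_of_nonneg_right (by linarith [Real.exp_pos (-(x ^ α))]) (by positivity)
    have := h01.union h1i
    rwa [Set.Ioc_union_Ioi_eq_Ioi (by norm_num : (0:ℝ) ≤ 1)] at this
end
end

section
/- Let k ≥ 1 and let A and B be independent binomial random variables with parameters (k, 1/2). Then the expected absolute difference satisfies E[|A − B|] = k·C(2k, k)/2^{2k}, where C(2k, k) is the central binomial coefficient. -/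
/-!
Replacing `B` by `k - B`, which has the same law, turns `|A - B|` into `|S - k|` with
`S = A + (k - B) ~ Bin(2k, 1/2)` (Vandermonde's convolution). For `Bin(N, 1/2)` the identity
`(N - 2s) C(N, s) = N (C(N - 1, s) - C(N - 1, s - 1))` telescopes to
`∑ s ≤ m, (N - 2s) C(N, s) = N C(N - 1, m)`; splitting `|N - 2s|` where `N - 2s` changes sign
gives `∑ s, |N - 2s| C(N, s) = 2N C(N - 1, ⌊(N - 1) / 2⌋)`, which is `2k C(2k, k)` for `N = 2k`.
-/

open MeasureTheory ProbabilityTheory Real Filter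

noncomputable section

open KVariance

open Finset

set_option linter.deprecated false

theorem sum_range_sum_range_choose_mul_choose_smul {M : Type*} [AddCommMonoid M] (a b : ℕ)
    (f : ℕ → M) :
    ∑ i ∈ range (a + 1), ∑ j ∈ range (b + 1), (a.choose i * b.choose j) • f (i + j)
      = ∑ s ∈ range (a + b + 1), (a + b).choose s • f s := by
  rw [← sum_product', ← sum_fiberwise_of_maps_to (g := fun p : ℕ × ℕ => p.1 + p.2)
    (t := range (a + b + 1)) fun p hp => by simp only [mem_product, mem_range] at hp ⊢; omega]
  refine sum_congr rfl fun s _ => ?_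
  rw [Nat.add_choose_eq, sum_smul]
  refine sum_subset (fun p hp => ?_) (fun p hp hp' => ?_) |>.trans (sum_congr rfl fun p hp => ?_)
  · simp only [mem_filter, mem_product, mem_range] at hp
    exact mem_antidiagonal.mpr hp.2
  · simp only [mem_filter, mem_product, mem_range, not_and] at hp'
    have hlarge : a < p.1 ∨ b < p.2 := by
      by_contra! hsmall
      exact hp' ⟨by omega, by omega⟩ (mem_antidiagonal.mp hp)
    rcases hlarge with h | h <;> simp [Nat.choose_eq_zero_of_lt h]
  · rw [mem_antidiagonal.mp hp]

theorem sum_range_choose_mul_sub_two_mul (n m : ℕ) :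
    ∑ s ∈ range (m + 1), ((n + 1).choose s : ℤ) * ((n + 1 : ℤ) - 2 * s)
      = (n + 1) * n.choose m := by
  induction m with
  | zero => simp
  | succ m ih =>
    have absorb : ((n + 1 : ℕ) : ℤ) * n.choose m = (n + 1).choose (m + 1) * (m + 1 : ℕ) := by
      exact_mod_cast Nat.add_one_mul_choose_eq n m
    rw [Nat.choose_succ_succ' n m] at absorb
    rw [sum_range_succ, ih, Nat.choose_succ_succ' n m]
    push_cast at absorb ⊢
    linear_combination (2 : ℤ) * absorb

theorem sum_range_choose_mul_abs_sub_two_mul (n : ℕ) :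
    ∑ s ∈ range (n + 2), ((n + 1).choose s : ℤ) * |(n + 1 : ℤ) - 2 * s|
      = 2 * (n + 1) * n.choose (n / 2) := by
  set f : ℕ → ℤ := fun s => ((n + 1).choose s : ℤ) * ((n + 1 : ℤ) - 2 * s)
  have partial_sum (m : ℕ) : ∑ s ∈ range (m + 1), f s = (n + 1) * n.choose m :=
    sum_range_choose_mul_sub_two_mul n m
  have lower : ∑ s ∈ range (n / 2 + 1), ((n + 1).choose s : ℤ) * |(n + 1 : ℤ) - 2 * s|
      = ∑ s ∈ range (n / 2 + 1), f s := by
    refine sum_congr rfl fun s hs => ?_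
    rw [abs_of_nonneg]
    have := mem_range.mp hs
    omega
  have upper : ∑ s ∈ Ico (n / 2 + 1) (n + 2), ((n + 1).choose s : ℤ) * |(n + 1 : ℤ) - 2 * s|
      = -∑ s ∈ Ico (n / 2 + 1) (n + 2), f s := by
    rw [← sum_neg_distrib]
    refine sum_congr rfl fun s hs => ?_
    rw [abs_of_nonpos, mul_neg]
    have := (mem_Ico.mp hs).1
    omega
  rw [← sum_range_add_sum_Ico _ (by omega : n / 2 + 1 ≤ n + 2), lower, upper,
    sum_Ico_eq_sub _ (by omega), partial_sum, partial_sum, Nat.choose_succ_self]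
  push_cast
  ring

theorem sum_range_choose_two_mul_mul_abs_sub (k : ℕ) :
    ∑ s ∈ range (2 * k + 1), ((2 * k).choose s : ℤ) * |(k : ℤ) - s| = k * (2 * k).choose k := by
  rcases k with _ | K
  · simp
  have absorb : ((2 * K + 1 + 1 : ℕ) : ℤ) * (2 * K + 1).choose K
      = (2 * K + 1 + 1).choose (K + 1) * (K + 1 : ℕ) := by
    exact_mod_cast Nat.add_one_mul_choose_eq (2 * K + 1) K
  have hN : 2 * (K + 1) = 2 * K + 1 + 1 := by ring
  refine mul_left_cancel₀ (two_ne_zero' ℤ) ?_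
  calc 2 * ∑ s ∈ range (2 * (K + 1) + 1), ((2 * (K + 1)).choose s : ℤ) * |((K + 1 : ℕ) : ℤ) - s|
      = ∑ s ∈ range (2 * K + 1 + 2),
          ((2 * K + 1 + 1).choose s : ℤ) * |((2 * K + 1 : ℕ) + 1 : ℤ) - 2 * s| := by
        rw [mul_sum, hN]
        refine sum_congr rfl fun s _ => ?_
        rw [mul_left_comm, ← abs_two, ← abs_mul, abs_two]
        push_cast
        ring_nf
    _ = 2 * ((2 * K + 1 : ℕ) + 1) * (2 * K + 1).choose ((2 * K + 1) / 2) :=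
        sum_range_choose_mul_abs_sub_two_mul _
    _ = 2 * ((K + 1 : ℕ) * (2 * (K + 1)).choose (K + 1)) := by
        rw [show (2 * K + 1) / 2 = K by omega, hN]
        push_cast at absorb ⊢
        linear_combination 2 * absorb

theorem sum_range_sum_range_choose_mul_choose_mul_abs_sub (k : ℕ) :
    ∑ i ∈ range (k + 1), ∑ j ∈ range (k + 1), (k.choose i * k.choose j : ℤ) * |(i : ℤ) - j|
      = k * (2 * k).choose k := by
  calc _ = ∑ i ∈ range (k + 1), ∑ j ∈ range (k + 1),
          (k.choose i * k.choose j) • |(k : ℤ) - (i + j : ℕ)| := by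
        refine sum_congr rfl fun i _ => ?_
        rw [← sum_range_reflect]
        refine sum_congr rfl fun j hj => ?_
        have hjk : j ≤ k := Nat.lt_succ_iff.mp (mem_range.mp hj)
        rw [add_tsub_cancel_right, Nat.choose_symm hjk, nsmul_eq_mul, Nat.cast_sub hjk,
          abs_sub_comm]
        push_cast
        ring_nf
    _ = ∑ s ∈ range (2 * k + 1), (2 * k).choose s • |(k : ℤ) - s| := by
        rw [two_mul]
        exact sum_range_sum_range_choose_mul_choose_smul k k fun s => |(k : ℤ) - s|
    _ = k * (2 * k).choose k := by
        simp only [nsmul_eq_mul]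
        exact sum_range_choose_two_mul_mul_abs_sub k

theorem PMF.integral_toMeasure_prod_toMeasure {α β : Type*} [Fintype α] [Fintype β]
    [MeasurableSpace α] [MeasurableSingletonClass α] [MeasurableSpace β]
    [MeasurableSingletonClass β] (p : PMF α) (q : PMF β) (f : α × β → ℝ) :
    ∫ x, f x ∂(p.toMeasure.prod q.toMeasure)
      = ∑ a, ∑ b, (p a).toReal * (q b).toReal * f (a, b) := by
  rw [integral_prod _ .of_finite, PMF.integral_eq_sum]
  simp_rw [PMF.integral_eq_sum, smul_eq_mul, mul_sum, mul_assoc]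

theorem PMF.toReal_binomial_half_apply (h : (1 / 2 : NNReal) ≤ 1) (n : ℕ) (i : Fin (n + 1)) :
    (PMF.binomial (1 / 2) h n i).toReal = n.choose i / 2 ^ n := by
  have hi : (i : ℕ) + (n - i) = n := Nat.add_sub_cancel' (Nat.lt_succ_iff.mp i.is_lt)
  rw [PMF.binomial_apply, Fin.val_last]
  norm_num
  rw [← pow_add, hi, div_pow, one_pow, div_mul_eq_mul_div, one_mul]

/-- for independent binomial random variables `A, B` with parameters
`(k, 1/2)`, the expected absolute difference is `E|A - B| = k · C(2k, k) / 2^(2k)`. -/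
theorem statement16 (k : ℕ) :
    (∫ p, |(((p.1 : Fin (k + 1)) : ℕ) : ℝ) - (((p.2 : Fin (k + 1)) : ℕ) : ℝ)|
        ∂(((PMF.binomial (1 / 2) (by norm_num) k).toMeasure).prod
            ((PMF.binomial (1 / 2) (by norm_num) k).toMeasure)))
      = (k : ℝ) * (Nat.choose (2 * k) k : ℝ) / 2 ^ (2 * k) := by
  have key : ∑ i ∈ range (k + 1), ∑ j ∈ range (k + 1),
      (k.choose i * k.choose j : ℝ) * |(i : ℝ) - j| = k * (2 * k).choose k := by
    exact_mod_cast sum_range_sum_range_choose_mul_choose_mul_abs_sub k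
  simp_rw [sum_range] at key
  rw [PMF.integral_toMeasure_prod_toMeasure, ← key]
  simp only [PMF.toReal_binomial_half_apply, sum_div]
  refine sum_congr rfl fun i _ => sum_congr rfl fun j _ => ?_
  rw [two_mul, pow_add]
  ring
end
end

section
/- Let μ = (1/2)(δ_0 + δ_1) be the uniform measure on the two-point set {0, 1} ⊂ ℝ, and let X = (X_1,…,X_k) and Y = (Y_1,…,Y_k) be independent k-tuples of i.i.d. samples from μ. Then the expected matching cost satisfies E[M(X,Y)] = C(2k, k)/2^{2k}, where M(x,y) := min over permutations σ of {1,…,k} of (1/k)·∑_{i=1}^k (x_i − y_{σ(i)})² and C(2k,k) is the central binomial coefficient. Equivalently, M(X,Y) = |A − B|/k where A = #{i : X_i = 1} and B = #{i : Y_i = 1}. -/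
open MeasureTheory ProbabilityTheory Real Filter

noncomputable section

open KVariance

/-- The uniform measure on the two-point set `{0, 1} ⊂ ℝ`: `(1/2)(δ₀ + δ₁)`. -/
noncomputable def twoPoint : MeasureTheory.Measure ℝ :=
  (2⁻¹ : ENNReal) • MeasureTheory.Measure.dirac (0 : ℝ)
    + (2⁻¹ : ENNReal) • MeasureTheory.Measure.dirac (1 : ℝ)


namespace S17
open Finset MeasureTheory
open scoped Classical


lemma abs_cast_sub (n k : ℕ) : |(n:ℝ) - k| = ((n - k : ℕ) : ℝ) + ((k - n : ℕ):ℝ) := by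
  rcases le_total k n with h | h
  · rw [Nat.sub_eq_zero_of_le h, Nat.cast_sub h, Nat.cast_zero, add_zero,
      abs_of_nonneg (sub_nonneg.2 (Nat.cast_le.2 h))]
  · rw [Nat.sub_eq_zero_of_le h, Nat.cast_sub h, Nat.cast_zero, zero_add,
      abs_of_nonpos (sub_nonpos.2 (Nat.cast_le.2 h))]
    ring

lemma sum_trunc (k : ℕ) :
    ∑ n ∈ range (2*k+1), ((2*k).choose n : ℝ) * ((n - k : ℕ) : ℝ)
      = k * (2*k).choose k / 2 := by
  set f : ℕ → ℝ := fun i => (((k+i) * (2*k).choose (k+i) : ℕ) : ℝ) with hf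
  have hstep : ∀ d : ℕ, d ≤ k → f d - f (d+1) = 2 * d * (2*k).choose (k+d) := by
    intro d hd
    have h := Nat.choose_succ_right_eq (2*k) (k+d)
    have h2 : 2*k - (k+d) = k - d := by omega
    rw [h2] at h
    have h3 : ((2*k).choose (k+d+1) : ℝ) * (k+d+1) = ((2*k).choose (k+d) : ℝ) * ((k:ℝ) - d) := by
      have := congrArg (Nat.cast : ℕ → ℝ) h
      push_cast [Nat.cast_sub hd] at this ⊢
      linarith [this]
    simp only [hf]
    have e2 : k + (d+1) = k+d+1 := by omega
    rw [e2]
    push_cast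
    nlinarith [h3]
  have hsplit : 2*k+1 = (k+1) + k := by ring
  rw [hsplit, Finset.sum_range_add]
  have h1 : ∑ i ∈ range (k+1), ((2*k).choose i : ℝ) * ((i - k : ℕ) : ℝ) = 0 := by
    apply Finset.sum_eq_zero
    intro i hi
    rw [mem_range] at hi
    rw [Nat.sub_eq_zero_of_le (by omega)]
    simp
  rw [h1, zero_add]
  have h2 : ∀ i ∈ range k, ((2*k).choose (k+1+i) : ℝ) * (((k+1+i) - k : ℕ) : ℝ)
      = (f (i+1) - f (i+1+1)) / 2 := by
    intro i hi
    rw [mem_range] at hi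
    rw [hstep (i+1) (by omega)]
    have e1 : k+1+i - k = i+1 := by omega
    have e2 : k+(i+1) = k+1+i := by omega
    rw [e1, e2]
    push_cast
    ring
  rw [Finset.sum_congr rfl h2, ← Finset.sum_div]
  rw [Finset.sum_range_sub' (fun i => f (i+1)) k]
  have hz : f (k+1) = 0 := by
    simp only [hf]
    rw [Nat.choose_eq_zero_of_lt (by omega)]
    simp
  rw [hz, sub_zero]
  have habs : ((2*k).choose (k+1) * (k+1) : ℕ) = ((2*k).choose k * k : ℕ) := by
    have := Nat.choose_succ_right_eq (2*k) k
    rw [this]; congr 1; omega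
  have habs' : ((2*k).choose (k+1) : ℝ) * (k+1) = ((2*k).choose k : ℝ) * k :=
    mod_cast congrArg (Nat.cast : ℕ → ℝ) habs
  simp only [hf]
  push_cast
  nlinarith [habs']

lemma sum_choose_abs (k : ℕ) :
    ∑ n ∈ range (2*k+1), ((2*k).choose n : ℝ) * |(n:ℝ) - k|
      = k * (2*k).choose k := by
  have h1 : ∀ n ∈ range (2*k+1), ((2*k).choose n : ℝ) * |(n:ℝ) - k|
      = ((2*k).choose n : ℝ) * ((n - k : ℕ) : ℝ) + ((2*k).choose n : ℝ) * ((k - n : ℕ) : ℝ) := by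
    intro n _
    rw [abs_cast_sub]; ring
  rw [Finset.sum_congr rfl h1, Finset.sum_add_distrib]
  have h2 : ∑ n ∈ range (2*k+1), ((2*k).choose n : ℝ) * ((k - n : ℕ) : ℝ)
      = ∑ n ∈ range (2*k+1), ((2*k).choose n : ℝ) * ((n - k : ℕ) : ℝ) := by
    rw [← Finset.sum_range_reflect]
    apply Finset.sum_congr rfl
    intro j hj
    rw [mem_range] at hj
    have e1 : 2*k+1-1-j = 2*k-j := by omega
    have e2 : (2*k).choose (2*k-j) = (2*k).choose j := Nat.choose_symm (by omega)
    have e3 : k - (2*k - j) = j - k := by omega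
    rw [e1, e2, e3]
  rw [h2, sum_trunc]
  ring


def boolFinsetEquiv (ι : Type*) [Fintype ι] [DecidableEq ι] : (ι → Bool) ≃ Finset ι where
  toFun w := univ.filter (fun i => w i = true)
  invFun S := fun i => decide (i ∈ S)
  left_inv w := by funext i; simp
  right_inv S := by ext i; simp

lemma sum_fun_bool {ι : Type*} [Fintype ι] [DecidableEq ι] (f : ℕ → ℝ) :
    ∑ w : ι → Bool, f ((univ.filter fun i => w i = true).card)
      = ∑ n ∈ range (Fintype.card ι + 1), ((Fintype.card ι).choose n : ℝ) * f n := by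
  have h := Equiv.sum_comp (boolFinsetEquiv ι) (fun S : Finset ι => f S.card)
  have h2 : ∑ w : ι → Bool, f ((univ.filter fun i => w i = true).card)
      = ∑ S : Finset ι, f S.card := h
  rw [h2]
  have h3 : ∑ S : Finset ι, f S.card = ∑ S ∈ (univ : Finset ι).powerset, f S.card := by
    rw [Finset.powerset_univ]
  rw [h3, Finset.sum_powerset_apply_card]
  simp [Finset.card_univ, nsmul_eq_mul]

lemma double_binom (k : ℕ) (f : ℕ → ℝ) :
    ∑ a ∈ range (k+1), ∑ b ∈ range (k+1), (k.choose a : ℝ) * (k.choose b : ℝ) * f (a+b)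
      = ∑ n ∈ range (2*k+1), ((2*k).choose n : ℝ) * f n := by
  rw [← Finset.sum_product']
  have hsub : range (k+1) ×ˢ range (k+1)
      ⊆ (range (2*k+1) ×ˢ range (2*k+1)).filter (fun p => p.1 + p.2 ≤ 2*k) := by
    intro p hp
    simp only [mem_product, mem_range, mem_filter] at hp ⊢
    omega
  rw [Finset.sum_subset hsub (by
    intro p hp hnp
    simp only [mem_product, mem_range, mem_filter] at hp hnp
    have : k < p.1 ∨ k < p.2 := by omega
    rcases this with h | h
    · rw [Nat.choose_eq_zero_of_lt h]; simp
    · rw [Nat.choose_eq_zero_of_lt h]; simp)]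
  have hbi : (range (2*k+1) ×ˢ range (2*k+1)).filter (fun p => p.1 + p.2 ≤ 2*k)
      = (range (2*k+1)).biUnion (fun n => Finset.HasAntidiagonal.antidiagonal n) := by
    ext p
    simp only [mem_filter, mem_product, mem_range, mem_biUnion, Finset.HasAntidiagonal.mem_antidiagonal]
    constructor
    · intro h; exact ⟨p.1 + p.2, by omega, rfl⟩
    · rintro ⟨n, hn, h⟩; omega
  rw [hbi, Finset.sum_biUnion (by
    intro m _ n _ hmn
    simp only [Finset.disjoint_left]
    intro p hp hq
    rw [Finset.HasAntidiagonal.mem_antidiagonal] at hp hq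
    omega)]
  apply Finset.sum_congr rfl
  intro n _
  have : ∀ p ∈ Finset.HasAntidiagonal.antidiagonal n,
      (k.choose p.1 : ℝ) * (k.choose p.2 : ℝ) * f (p.1 + p.2)
        = (k.choose p.1 : ℝ) * (k.choose p.2 : ℝ) * f n := by
    intro p hp
    rw [Finset.HasAntidiagonal.mem_antidiagonal] at hp
    rw [hp]
  rw [Finset.sum_congr rfl this, ← Finset.sum_mul]
  congr 1
  have := Nat.add_choose_eq k k n
  have h2 : ((k+k).choose n : ℝ) = ∑ p ∈ Finset.HasAntidiagonal.antidiagonal n, (k.choose p.1 : ℝ) * (k.choose p.2 : ℝ) := by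
    rw [this]; push_cast; ring
  have e : 2*k = k+k := by omega
  rw [e]
  exact h2.symm


lemma key_sum (k : ℕ) :
    ∑ s : Fin k → Bool, ∑ t : Fin k → Bool,
      |(((univ.filter fun i => s i = true).card : ℕ) : ℝ)
        - (((univ.filter fun i => t i = true).card : ℕ) : ℝ)|
      = k * (2*k).choose k := by
  have hcard : Fintype.card (Fin k) = k := Fintype.card_fin k
  have h1 : ∀ a : ℕ,
      ∑ t : Fin k → Bool, |(a:ℝ) - (((univ.filter fun i => t i = true).card : ℕ) : ℝ)|
        = ∑ b ∈ range (k+1), (k.choose b : ℝ) * |(a:ℝ) - b| := by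
    intro a
    have := sum_fun_bool (ι := Fin k) (fun b => |(a:ℝ) - b|)
    rwa [hcard] at this
  have h2 : ∑ s : Fin k → Bool, ∑ t : Fin k → Bool,
      |(((univ.filter fun i => s i = true).card : ℕ) : ℝ)
        - (((univ.filter fun i => t i = true).card : ℕ) : ℝ)|
      = ∑ a ∈ range (k+1), (k.choose a : ℝ) *
          (∑ b ∈ range (k+1), (k.choose b : ℝ) * |(a:ℝ) - b|) := by
    rw [Finset.sum_congr rfl (fun s _ => h1 _)]
    have := sum_fun_bool (ι := Fin k)
      (fun a => ∑ b ∈ range (k+1), (k.choose b : ℝ) * |(a:ℝ) - b|)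
    rwa [hcard] at this
  rw [h2]
  have h3 : ∀ a ∈ range (k+1),
      (k.choose a : ℝ) * (∑ b ∈ range (k+1), (k.choose b : ℝ) * |(a:ℝ) - b|)
        = ∑ b ∈ range (k+1), (k.choose a : ℝ) * (k.choose b : ℝ) * |(a:ℝ) + b - k| := by
    intro a _
    have hrefl : ∑ b ∈ range (k+1), (k.choose b : ℝ) * |(a:ℝ) - b|
        = ∑ b ∈ range (k+1), (k.choose b : ℝ) * |(a:ℝ) + b - k| := by
      rw [← Finset.sum_range_reflect]
      apply Finset.sum_congr rfl
      intro b hb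
      rw [mem_range] at hb
      have e1 : k+1-1-b = k-b := by omega
      have e2 : k.choose (k-b) = k.choose b := Nat.choose_symm (by omega)
      have e3 : ((k - b : ℕ) : ℝ) = (k:ℝ) - b := by
        rw [Nat.cast_sub (by omega)]
      rw [e1, e2, e3]
      congr 1
      rw [show (a:ℝ) - ((k:ℝ) - b) = (a:ℝ) + b - k by ring]
    rw [hrefl, Finset.mul_sum]
    apply Finset.sum_congr rfl
    intro b _
    ring
  rw [Finset.sum_congr rfl h3]
  have h4 := double_binom k (fun n => |(n:ℝ) - k|)
  simp only [Nat.cast_add] at h4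
  rw [show (∑ a ∈ range (k+1), ∑ b ∈ range (k+1),
      (k.choose a : ℝ) * (k.choose b : ℝ) * |(a:ℝ) + b - k|)
    = ∑ a ∈ range (k+1), ∑ b ∈ range (k+1),
      (k.choose a : ℝ) * (k.choose b : ℝ) * |((a+b : ℕ):ℝ) - k| by
    apply Finset.sum_congr rfl; intro a _; apply Finset.sum_congr rfl; intro b _
    push_cast; ring_nf]
  rw [double_binom k (fun n => |(n:ℝ) - k|), sum_choose_abs]

variable {k : ℕ}

lemma card_perm_filter (σ : Equiv.Perm (Fin k)) (p : Fin k → Prop) [DecidablePred p] :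
    (univ.filter fun i => p (σ i)).card = (univ.filter p).card := by
  apply Finset.card_bij (fun a _ => σ a)
  · intro a ha
    simp only [mem_filter, mem_univ, true_and] at ha ⊢
    exact ha
  · intro a _ b _ hab
    exact σ.injective hab
  · intro b hb
    refine ⟨σ.symm b, ?_, by simp⟩
    simp only [mem_filter, mem_univ, true_and] at hb ⊢
    simpa using hb

lemma sum_sq_eq_card (x y : Fin k → ℝ) (hx : ∀ i, x i = 0 ∨ x i = 1)
    (hy : ∀ i, y i = 0 ∨ y i = 1) (σ : Equiv.Perm (Fin k)) :
    ∑ i, (x i - y (σ i)) ^ 2 = ((univ.filter fun i => x i ≠ y (σ i)).card : ℝ) := by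
  have h : ∀ i, (x i - y (σ i))^2 = if x i ≠ y (σ i) then (1:ℝ) else 0 := by
    intro i
    rcases hx i with h1 | h1 <;> rcases hy (σ i) with h2 | h2 <;>
      simp [h1, h2] <;> norm_num
  rw [Finset.sum_congr rfl (fun i _ => h i), Finset.sum_boole]

lemma mismatch_lower (x y : Fin k → ℝ) (hx : ∀ i, x i = 0 ∨ x i = 1)
    (hy : ∀ i, y i = 0 ∨ y i = 1) (σ : Equiv.Perm (Fin k)) :
    |((univ.filter fun i => x i = 1).card : ℝ) - ((univ.filter fun i => y i = 1).card : ℝ)|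
      ≤ ((univ.filter fun i => x i ≠ y (σ i)).card : ℝ) := by
  set S := univ.filter fun i => x i = 1
  set T := univ.filter fun i : Fin k => y (σ i) = 1
  set M := univ.filter fun i => x i ≠ y (σ i)
  have hT : T.card = (univ.filter fun i => y i = 1).card := by
    simpa [T] using card_perm_filter σ (fun i => y i = 1)
  have h1 : S ⊆ T ∪ M := by
    intro i hi
    simp only [S, T, M, mem_filter, mem_univ, true_and, mem_union] at hi ⊢
    by_cases h : x i = y (σ i)
    · left; rw [← h]; exact hi
    · right; exact h
  have h2 : T ⊆ S ∪ M := by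
    intro i hi
    simp only [S, T, M, mem_filter, mem_univ, true_and, mem_union] at hi ⊢
    by_cases h : x i = y (σ i)
    · left; rw [h]; exact hi
    · right; exact h
  have c1 : S.card ≤ T.card + M.card :=
    le_trans (Finset.card_le_card h1) (Finset.card_union_le _ _)
  have c2 : T.card ≤ S.card + M.card :=
    le_trans (Finset.card_le_card h2) (Finset.card_union_le _ _)
  rw [← hT, abs_sub_le_iff]
  constructor
  · have := (Nat.cast_le (α := ℝ)).2 c1
    push_cast at this
    linarith
  · have := (Nat.cast_le (α := ℝ)).2 c2
    push_cast at this
    linarith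

lemma exists_perm_le (x y : Fin k → ℝ) (hx : ∀ i, x i = 0 ∨ x i = 1)
    (hy : ∀ i, y i = 0 ∨ y i = 1)
    (h : (univ.filter fun i => x i = 1).card ≤ (univ.filter fun i => y i = 1).card) :
    ∃ σ : Equiv.Perm (Fin k), (univ.filter fun i => x i ≠ y (σ i)).card
      = (univ.filter fun i => y i = 1).card - (univ.filter fun i => x i = 1).card := by
  classical
  set S := univ.filter fun i => x i = 1 with hS
  set T := univ.filter fun i => y i = 1 with hT
  obtain ⟨T', hT'sub, hT'card⟩ := Finset.exists_subset_card_eq h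
  have e1 : {i // i ∈ S} ≃ {i // i ∈ T'} := by
    apply Fintype.equivOfCardEq
    rw [Fintype.card_coe, Fintype.card_coe, hT'card]
  have e2 : {i // ¬ i ∈ S} ≃ {i // ¬ i ∈ T'} := by
    apply Fintype.equivOfCardEq
    rw [Fintype.card_subtype_compl, Fintype.card_subtype_compl]
    congr 1
    rw [Fintype.card_coe, Fintype.card_coe, hT'card]
  set σ := Equiv.subtypeCongr e1 e2 with hσ
  have hpos : ∀ i, i ∈ S → σ i ∈ T' := by
    intro i hi
    have : σ i = ↑(e1 ⟨i, hi⟩) := by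
      simp only [hσ, Equiv.subtypeCongr, Equiv.trans_apply,
        Equiv.sumCompl_symm_apply_of_pos hi, Equiv.sumCongr_apply, Sum.map_inl,
        Equiv.sumCompl_apply_inl]
    rw [this]
    exact (e1 ⟨i, hi⟩).2
  have hneg : ∀ i, i ∉ S → σ i ∉ T' := by
    intro i hi
    have : σ i = ↑(e2 ⟨i, hi⟩) := by
      simp only [hσ, Equiv.subtypeCongr, Equiv.trans_apply,
        Equiv.sumCompl_symm_apply_of_neg hi, Equiv.sumCongr_apply, Sum.map_inr,
        Equiv.sumCompl_apply_inr]
    rw [this]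
    exact (e2 ⟨i, hi⟩).2
  refine ⟨σ, ?_⟩
  have hfe : (univ.filter fun i => x i ≠ y (σ i)) = univ.filter fun i => σ i ∈ T \ T' := by
    ext i
    simp only [mem_filter, mem_univ, true_and, Finset.mem_sdiff]
    have hxS : x i = 1 ↔ i ∈ S := by simp [hS]
    have hyT : y (σ i) = 1 ↔ σ i ∈ T := by simp [hT]
    by_cases hi : i ∈ S
    · have h1 : x i = 1 := hxS.2 hi
      have h2 : σ i ∈ T' := hpos i hi
      have h3 : σ i ∈ T := hT'sub h2
      have h4 : y (σ i) = 1 := hyT.2 h3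
      simp [h1, h4, h2]
    · have h1 : x i = 0 := (hx i).resolve_right (fun hh => hi (hxS.1 hh))
      have h2 : σ i ∉ T' := hneg i hi
      rcases hy (σ i) with h3 | h3
      · have h4 : σ i ∉ T := by
          intro hh
          have := hyT.2 hh
          rw [h3] at this
          norm_num at this
        simp [h1, h3, h4]
      · have h4 : σ i ∈ T := hyT.1 h3
        simp [h1, h3, h4, h2]
  rw [hfe]
  rw [card_perm_filter σ (fun j => j ∈ T \ T'), Finset.filter_univ_mem,
    Finset.card_sdiff_of_subset hT'sub, hT'card]

lemma exists_perm_abs (x y : Fin k → ℝ) (hx : ∀ i, x i = 0 ∨ x i = 1)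
    (hy : ∀ i, y i = 0 ∨ y i = 1) :
    ∃ σ : Equiv.Perm (Fin k), ((univ.filter fun i => x i ≠ y (σ i)).card : ℝ)
      = |((univ.filter fun i => x i = 1).card : ℝ) - ((univ.filter fun i => y i = 1).card : ℝ)| := by
  rcases le_total ((univ.filter fun i => x i = 1).card) ((univ.filter fun i => y i = 1).card) with h | h
  · obtain ⟨σ, hσ⟩ := exists_perm_le x y hx hy h
    refine ⟨σ, ?_⟩
    rw [hσ, abs_sub_comm, abs_of_nonneg (by
      have := (Nat.cast_le (α := ℝ)).2 h; linarith), Nat.cast_sub h]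
  · obtain ⟨σ, hσ⟩ := exists_perm_le y x hy hx h
    refine ⟨σ⁻¹, ?_⟩
    have hcc : (univ.filter fun j => x (σ j) ≠ y (σ⁻¹ (σ j))).card
        = (univ.filter fun i => x i ≠ y (σ⁻¹ i)).card :=
      card_perm_filter σ (fun i => x i ≠ y (σ⁻¹ i))
    have hfe : (univ.filter fun j => x (σ j) ≠ y (σ⁻¹ (σ j)))
        = univ.filter fun j => y j ≠ x (σ j) := by
      ext j
      simp only [mem_filter, mem_univ, true_and]
      rw [← Equiv.Perm.mul_apply, inv_mul_cancel, Equiv.Perm.one_apply]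
      exact ne_comm
    rw [hfe] at hcc
    rw [← hcc, hσ, abs_of_nonneg (by
      have := (Nat.cast_le (α := ℝ)).2 h; linarith), Nat.cast_sub h]

theorem part1 (hk : 1 ≤ k) (x y : Fin k → ℝ) (hx : ∀ i, x i = 0 ∨ x i = 1)
    (hy : ∀ i, y i = 0 ∨ y i = 1) :
    matchCost1 x y =
      |((univ.filter fun i => x i = 1).card : ℝ)
        - ((univ.filter fun i => y i = 1).card : ℝ)| / (k : ℝ) := by
  obtain ⟨σ0, hσ0⟩ := exists_perm_abs x y hx hy
  have hbdd : BddBelow (Set.range fun σ : Equiv.Perm (Fin k) => ∑ i, (x i - y (σ i)) ^ 2) :=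
    Finite.bddBelow_range _
  have hinf : (⨅ σ : Equiv.Perm (Fin k), ∑ i, (x i - y (σ i)) ^ 2)
      = |((univ.filter fun i => x i = 1).card : ℝ)
        - ((univ.filter fun i => y i = 1).card : ℝ)| := by
    apply le_antisymm
    · have h1 := ciInf_le hbdd σ0
      rwa [sum_sq_eq_card x y hx hy σ0, hσ0] at h1
    · exact le_ciInf fun σ => by
        rw [sum_sq_eq_card x y hx hy σ]
        exact mismatch_lower x y hx hy σ
  rw [matchCost1, hinf, one_div, inv_mul_eq_div]

instance : IsProbabilityMeasure twoPoint := by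
  constructor
  simp only [twoPoint, Measure.add_apply, Measure.smul_apply, smul_eq_mul,
    measure_univ, mul_one]
  exact ENNReal.inv_two_add_inv_two

def ind {k : ℕ} (s : Fin k → Bool) : Fin k → ℝ := fun i => if s i then 1 else 0

lemma twoPoint_apply (A : Set ℝ) :
    twoPoint A = 2⁻¹ * (if (0:ℝ) ∈ A then 1 else 0) + 2⁻¹ * (if (1:ℝ) ∈ A then 1 else 0) := by
  simp [twoPoint, Measure.dirac_apply, Set.indicator_apply]

lemma hpi (k : ℕ) : Measure.pi (fun _ : Fin k => twoPoint)
    = ∑ s : Fin k → Bool, ((2:ENNReal)^k)⁻¹ • Measure.dirac (ind s) := by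
  refine Measure.pi_eq fun t ht => ?_
  rw [Measure.finset_sum_apply]
  simp only [Measure.smul_apply, smul_eq_mul, Measure.dirac_apply, Set.indicator_apply,
    Pi.one_apply, Set.mem_pi, Set.mem_univ, forall_true_left]
  have hrhs : ∀ i : Fin k, twoPoint (t i)
      = ∑ b : Bool, 2⁻¹ * (if (if b then (1:ℝ) else 0) ∈ t i then (1:ENNReal) else 0) := by
    intro i
    simp [twoPoint_apply, Fintype.sum_bool]
    ring
  rw [Finset.prod_congr rfl (fun i _ => hrhs i), Fintype.prod_sum]
  apply Finset.sum_congr rfl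
  intro s _
  rw [Finset.prod_mul_distrib, Finset.prod_const]
  simp only [Finset.prod_boole]
  simp only [card_univ, Fintype.card_fin, mem_univ, forall_true_left]
  rw [ENNReal.inv_pow]
  split_ifs with h1 h2 h2
  · simp
  · exact absurd h1 h2
  · exact absurd h2 h1
  · simp

lemma ite_and_mul (P Q : Prop) [Decidable P] [Decidable Q] :
    (if P ∧ Q then (1:ENNReal) else 0) = (if P then 1 else 0) * (if Q then 1 else 0) := by
  by_cases hP : P <;> by_cases hQ : Q <;> simp [hP, hQ]

lemma hprod (k : ℕ) :
    (Measure.pi fun _ : Fin k => twoPoint).prod (Measure.pi fun _ : Fin k => twoPoint)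
      = ∑ st : (Fin k → Bool) × (Fin k → Bool),
          (((2:ENNReal)^k)⁻¹ * ((2:ENNReal)^k)⁻¹) • Measure.dirac (ind st.1, ind st.2) := by
  refine Measure.prod_eq fun A B hA hB => ?_
  rw [Measure.finset_sum_apply]
  simp only [Measure.smul_apply, smul_eq_mul, Measure.dirac_apply, Set.indicator_apply,
    Pi.one_apply, Set.mem_prod]
  rw [hpi k, Measure.finset_sum_apply, Measure.finset_sum_apply]
  simp only [Measure.smul_apply, smul_eq_mul, Measure.dirac_apply, Set.indicator_apply,
    Pi.one_apply]
  rw [Finset.sum_mul_sum, Fintype.sum_prod_type]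
  apply Finset.sum_congr rfl
  intro s _
  apply Finset.sum_congr rfl
  intro t _
  rw [ite_and_mul]
  ring

lemma integral_prod_eq (k : ℕ) (f : ((Fin k → ℝ) × (Fin k → ℝ)) → ℝ) :
    ∫ p, f p ∂((Measure.pi fun _ : Fin k => twoPoint).prod (Measure.pi fun _ : Fin k => twoPoint))
      = ∑ st : (Fin k → Bool) × (Fin k → Bool), ((4:ℝ)^k)⁻¹ * f (ind st.1, ind st.2) := by
  have hne : ((2:ENNReal)^k)⁻¹ * ((2:ENNReal)^k)⁻¹ ≠ ⊤ := by
    apply ENNReal.mul_ne_top <;>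
      exact ENNReal.inv_ne_top.2 (pow_ne_zero _ (by norm_num))
  have hint : ∀ st : (Fin k → Bool) × (Fin k → Bool), st ∈ univ →
      Integrable f ((((2:ENNReal)^k)⁻¹ * ((2:ENNReal)^k)⁻¹) • Measure.dirac (ind st.1, ind st.2)) := by
    intro st _
    exact ((integrable_const (f (ind st.1, ind st.2))).congr
      (ae_eq_dirac f).symm).smul_measure hne
  rw [hprod k, integral_finset_sum_measure hint]
  apply Finset.sum_congr rfl
  intro st _
  rw [integral_smul_measure, integral_dirac]
  have : (((2:ENNReal)^k)⁻¹ * ((2:ENNReal)^k)⁻¹).toReal = ((4:ℝ)^k)⁻¹ := by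
    rw [ENNReal.toReal_mul, ENNReal.toReal_inv, ENNReal.toReal_pow,
      ENNReal.toReal_ofNat, ← mul_inv, ← mul_pow]
    norm_num
  rw [this, smul_eq_mul]

end S17

/-- for `μ = (1/2)(δ₀ + δ₁)` and independent `k`-tuples `X, Y` of i.i.d.
samples from `μ`, the matching cost satisfies `M(X,Y) = |A - B|/k` where
`A = #{i : Xᵢ = 1}` and `B = #{i : Yᵢ = 1}`, and `E[M(X,Y)] = C(2k,k)/2^(2k)`. -/
theorem statement17 (k : ℕ) (hk : 1 ≤ k) :
    (∀ x y : Fin k → ℝ, (∀ i, x i = 0 ∨ x i = 1) → (∀ i, y i = 0 ∨ y i = 1) →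
        matchCost1 x y =
          |((Finset.univ.filter fun i => x i = 1).card : ℝ)
              - ((Finset.univ.filter fun i => y i = 1).card : ℝ)| / (k : ℝ)) ∧
      (∫ p, matchCost1 p.1 p.2
          ∂((MeasureTheory.Measure.pi fun _ : Fin k => twoPoint).prod
              (MeasureTheory.Measure.pi fun _ : Fin k => twoPoint)))
        = (Nat.choose (2 * k) k : ℝ) / 2 ^ (2 * k) := by
  constructor
  · exact fun x y hx hy => S17.part1 hk x y hx hy
  · rw [S17.integral_prod_eq k (fun p => matchCost1 p.1 p.2)]
    have hmc : ∀ st : (Fin k → Bool) × (Fin k → Bool),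
        matchCost1 (S17.ind st.1) (S17.ind st.2)
          = |(((Finset.univ.filter fun i => st.1 i = true).card : ℕ) : ℝ)
              - (((Finset.univ.filter fun i => st.2 i = true).card : ℕ) : ℝ)| / (k : ℝ) := by
      intro st
      have h1 := S17.part1 hk (S17.ind st.1) (S17.ind st.2)
        (fun i => by by_cases h : st.1 i = true <;> simp [S17.ind, h])
        (fun i => by by_cases h : st.2 i = true <;> simp [S17.ind, h])
      rw [h1]
      have e : ∀ s : Fin k → Bool,
          (Finset.univ.filter fun i => S17.ind s i = 1) = Finset.univ.filter fun i => s i = true := by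
        intro s
        apply Finset.filter_congr
        intro i _
        by_cases h : s i = true <;> simp [S17.ind, h]
      rw [e st.1, e st.2]
    rw [Finset.sum_congr rfl (fun st _ => by rw [hmc st])]
    have hpull : ∀ st : (Fin k → Bool) × (Fin k → Bool),
        ((4:ℝ)^k)⁻¹ * (|(((Finset.univ.filter fun i => st.1 i = true).card : ℕ) : ℝ)
              - (((Finset.univ.filter fun i => st.2 i = true).card : ℕ) : ℝ)| / (k : ℝ))
        = (((4:ℝ)^k)⁻¹ / k) * |(((Finset.univ.filter fun i => st.1 i = true).card : ℕ) : ℝ)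
              - (((Finset.univ.filter fun i => st.2 i = true).card : ℕ) : ℝ)| := by
      intro st; ring
    rw [Finset.sum_congr rfl (fun st _ => hpull st), ← Finset.mul_sum]
    rw [Fintype.sum_prod_type, S17.key_sum k]
    have hk0 : (k:ℝ) ≠ 0 := Nat.cast_ne_zero.2 (by omega)
    have h4 : (2:ℝ) ^ (2*k) = 4^k := by
      rw [pow_mul]; norm_num
    rw [h4]
    field_simp
end
end
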